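/- arXiv:1612.01365 — 2 statements merged into one kernel-verified Lean document; each statement's English description precedes it below -/
import Mathlib

section
/- Let F : ℝ^n → ℝ be a symmetric n-additive function whose trace x ↦ F(x,…,x) is continuous at a point (or more generally locally regular). Then there exists c ∈ ℝ such that F(x₁,…,x_n) = c·x₁⋯x_n for all x₁,…,x_n ∈ ℝ. -/
/-!
Each of the regularity hypotheses yields a set `s` of positive measure on which the trace is
bounded. By a Steinhaus-type argument, once `y` is small, `s` contains all the points
`x + ∑ i ∈ S, y i` (`S ⊆ {1, …, n}`) for some `x`.
The polarization formula `n! F(y) = ∑_S (-1)^(n - |S|) F(x + y_S, …, x + y_S)` then bounds `F`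
on a neighbourhood of `0`. Since `F` is `ℚ`-multilinear, rescaling the other variables into that
neighbourhood shows that each partial map is additive and bounded near `0`, hence `ℝ`-linear.
So `F` is `ℝ`-multilinear on `ℝⁿ`, i.e. a multiple of `x₁ ⋯ xₙ`.
-/

open MeasureTheory Finset Filter Topology Bornology Function

theorem ContinuousAt.exists_measure_pos_isBounded_image {α E : Type*} [TopologicalSpace α]
    [MeasurableSpace α] [OpensMeasurableSpace α] [PseudoMetricSpace E] (μ : Measure α)
    [μ.IsOpenPosMeasure] {f : α → E} {x₀ : α} (hf : ContinuousAt f x₀) :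
    ∃ s, MeasurableSet s ∧ 0 < μ s ∧ IsBounded (f '' s) := by
  obtain ⟨U, hUf, hU, hx₀U⟩ := mem_nhds_iff.1 (hf (Metric.ball_mem_nhds (f x₀) one_pos))
  exact ⟨U, hU.measurableSet, hU.measure_pos μ ⟨x₀, hx₀U⟩,
    Metric.isBounded_ball.subset (Set.image_subset_iff.2 hUf)⟩

theorem exists_measure_pos_isBounded_image_of_measurable_restrict {α E : Type*}
    [MeasurableSpace α] [PseudoMetricSpace E] [MeasurableSpace E] [OpensMeasurableSpace E]
    {μ : Measure α} {f : α → E} {s : Set α} (hs : MeasurableSet s) (hμs : 0 < μ s)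
    (hf : Measurable fun x : s => f x) :
    ∃ t, MeasurableSet t ∧ 0 < μ t ∧ IsBounded (f '' t) := by
  obtain ⟨y, -⟩ := nonempty_of_measure_ne_zero hμs.ne'
  have hcover : ⋃ N : ℕ, s ∩ f ⁻¹' Metric.ball (f y) N = s := by
    rw [← Set.inter_iUnion, ← Set.preimage_iUnion, Metric.iUnion_ball_nat, Set.preimage_univ,
      Set.inter_univ]
  obtain ⟨N, hN⟩ := exists_measure_pos_of_not_measure_iUnion_null (hcover ▸ hμs.ne')
  refine ⟨_, ?_, hN, Metric.isBounded_ball.subset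
    ((Set.image_mono Set.inter_subset_right).trans (Set.image_preimage_subset _ _))⟩
  rw [← Subtype.image_preimage_coe]
  exact hs.subtype_image (hf Metric.isOpen_ball.measurableSet)

theorem exists_mem_nhds_zero_forall_exists_add_mem {G ι : Type*} [AddCommGroup G]
    [TopologicalSpace G] [IsTopologicalAddGroup G] [T2Space G] [MeasurableSpace G] [BorelSpace G]
    [Finite ι] (μ : Measure G) [μ.IsAddRightInvariant] [μ.InnerRegular] [μ.OuterRegular]
    [IsFiniteMeasureOnCompacts μ] {s : Set G} (hs : MeasurableSet s) (hμs : 0 < μ s) :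
    ∃ V ∈ 𝓝 (0 : G), ∀ t : ι → G, (∀ j, t j ∈ V) → ∃ x, ∀ j, x + t j ∈ s := by
  have := Fintype.ofFinite ι
  obtain ⟨K, hKs, hK, hμK⟩ := hs.exists_lt_isCompact hμs
  have hKtop : μ K ≠ ⊤ := hK.measure_lt_top.ne
  obtain ⟨U, hKU, hU, -, hUK⟩ := hK.measurableSet.exists_isOpen_sdiff_lt hKtop
    (ε := μ K / Fintype.card ι) (by simp [hμK.ne'])
  obtain ⟨V, hV, hKVU⟩ := compact_open_separated_add_right hK hU hKU
  refine ⟨-V, neg_mem_nhds_zero G hV, fun t ht => ?_⟩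
  -- If no point lay in every translate `A j ⊆ U` of `K`, the sets `U \ A j`, each of measure
  -- `μ (U \ K) < μ K / card ι`, would cover `U ⊇ K`.
  by_contra! hnot
  set A : ι → Set G := fun j => (· + t j) ⁻¹' K
  have hAU : ∀ j, A j ⊆ U := fun j y hy => hKVU <| by
    simpa using Set.add_mem_add (show y + t j ∈ K from hy) (show -t j ∈ V from ht j)
  have hμA : ∀ j, μ (U \ A j) = μ (U \ K) := fun j => by
    rw [measure_sdiff (hAU j) (hK.measurableSet.preimage (measurable_add_const _)).nullMeasurableSet
      (by simpa [A, measure_preimage_add_right] using hKtop),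
      measure_sdiff hKU hK.measurableSet.nullMeasurableSet hKtop,
      measure_preimage_add_right]
  have hcover : U ⊆ ⋃ j, U \ A j := fun y hy => by
    obtain ⟨j, hj⟩ := hnot y
    exact Set.mem_iUnion.2 ⟨j, hy, fun h => hj (hKs h)⟩
  have : μ U < μ U := calc
    μ U ≤ ∑ j, μ (U \ A j) := (measure_mono hcover).trans (measure_iUnion_fintype_le _ _)
    _ = Fintype.card ι * μ (U \ K) := by simp [hμA]
    _ < μ K := ENNReal.mul_lt_of_lt_div' hUK
    _ ≤ μ U := measure_mono hKU
  exact this.false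

theorem Finset.sum_superset_neg_one_pow_card_compl {ι : Type*} [Fintype ι] [DecidableEq ι]
    (B : Finset ι) :
    ∑ S with B ⊆ S, (-1 : ℤ) ^ (Fintype.card ι - #S) = if B = univ then 1 else 0 := by
  have hcompl := sum_powerset_neg_one_pow_card (x := Bᶜ)
  simp only [compl_eq_empty_iff] at hcompl
  rw [← hcompl]
  refine sum_nbij' compl compl (fun S hS => ?_) (fun T hT => ?_) (fun S _ => compl_compl S)
    (fun T _ => compl_compl T) (fun S _ => by rw [card_compl])
  · simpa using (mem_filter.1 hS).2
  · simpa using subset_compl_comm.1 (mem_powerset.1 hT)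

theorem Finset.sum_ite_eraseNone_image_eq_univ {ι N : Type*} [Fintype ι] [DecidableEq ι]
    [AddCommMonoid N]     (f : (ι → Option ι) → N) :
    ∑ r : ι → Option ι, (if (univ.image r).eraseNone = univ then f r else 0) =
      ∑ σ : Equiv.Perm ι, f (some ∘ σ) := by
  rw [← sum_filter]
  symm
  refine sum_bij (fun σ _ => some ∘ σ) (fun σ _ => ?_) (fun σ _ τ _ h => ?_) (fun r hr => ?_)
    (fun _ _ => rfl)
  · simp only [mem_filter, mem_univ, true_and, eq_univ_iff_forall, mem_eraseNone, mem_image,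
      comp_apply, Option.some_inj]
    exact fun j => ⟨σ.symm j, σ.apply_symm_apply j⟩
  · exact Equiv.ext fun i => Option.some_injective _ (congrFun h i)
  · have hhit : ∀ j, ∃ i, r i = some j := by
      simpa [eq_univ_iff_forall] using (mem_filter.1 hr).2
    choose g hg using hhit
    have hg_inj : Injective g := fun j₁ j₂ h => Option.some_injective _ <| by rw [← hg, h, hg]
    let e := Equiv.ofBijective g (Finite.injective_iff_bijective.1 hg_inj)
    refine ⟨e.symm, mem_univ _, funext fun i => ?_⟩
    have hi := hg (e.symm i)
    rwa [show g (e.symm i) = i from e.apply_symm_apply i, eq_comm] at hi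

section Polarization

variable {R ι M N : Type*} [CommSemiring R] [Fintype ι] [DecidableEq ι] [AddCommMonoid M]
  [Module R M] [AddCommGroup N] [Module R N]

theorem MultilinearMap.apply_add_sum_eq_sum_ite (G : MultilinearMap R (fun _ : ι => M) N)
    (x : M) (v : ι → M) (S : Finset ι) :
    G (fun _ => x + ∑ i ∈ S, v i) =
      ∑ r : ι → Option ι,
        if (univ.image r).eraseNone ⊆ S then G (fun i => (r i).elim x v) else 0 := by
  have hsum : x + ∑ i ∈ S, v i = ∑ o ∈ S.insertNone, o.elim x v := by
    rw [sum_insertNone]; rfl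
  rw [hsum, G.map_sum_finset, ← sum_filter]
  refine sum_congr (Finset.ext fun r => ?_) fun _ _ => rfl
  simp only [Fintype.mem_piFinset, mem_insertNone, mem_filter, mem_univ, true_and, subset_iff,
    mem_eraseNone, mem_image, Option.mem_def]
  exact ⟨fun h j ⟨i, hi⟩ => h i j hi, fun h i j hi => h ⟨i, hi⟩⟩

theorem MultilinearMap.sum_neg_one_pow_smul_apply_add_sum (G : MultilinearMap R (fun _ : ι => M) N)
    (hG : ∀ (σ : Equiv.Perm ι) m, G (m ∘ σ) = G m) (x : M) (v : ι → M) :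
    ∑ S : Finset ι, (-1 : ℤ) ^ (Fintype.card ι - #S) • G (fun _ => x + ∑ i ∈ S, v i) =
      (Fintype.card ι).factorial • G v := by
  simp_rw [G.apply_add_sum_eq_sum_ite, smul_sum, smul_ite, smul_zero]
  rw [sum_comm]
  simp_rw [← sum_filter, ← sum_smul, sum_superset_neg_one_pow_card_compl, ite_smul, one_smul,
    zero_smul, sum_ite_eraseNone_image_eq_univ]
  exact (sum_congr rfl fun σ _ => hG σ v).trans (by simp [Fintype.card_perm])

end Polarization

def MultilinearMap.ofMapUpdateAdd {ι M N : Type*} [DecidableEq ι] [AddCommGroup M] [Module ℚ M]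
    [AddCommGroup N] [Module ℚ N] (F : (ι → M) → N)
    (hF : ∀ m i x y, F (update m i (x + y)) = F (update m i x) + F (update m i y)) :
    MultilinearMap ℚ (fun _ : ι => M) N where
  toFun := F
  map_update_add' m i x y := by convert hF m i x y
  map_update_smul' m i q x :=
    map_rat_smul (AddMonoidHom.mk' (fun y => F (update m i y)) fun y z => by convert hF m i y z) q x

theorem MultilinearMap.map_update_mul_of_isBounded {ι : Type*} [Fintype ι] [DecidableEq ι]
    (G : MultilinearMap ℚ (fun _ : ι => ℝ) ℝ) {W : Set (ι → ℝ)} (hW : W ∈ 𝓝 0)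
    (hGW : IsBounded (G '' W)) (m : ι → ℝ) (i : ι) (c x : ℝ) :
    G (update m i (c * x)) = c * G (update m i x) := by
  obtain ⟨r, hr, hrW⟩ := Metric.mem_nhds_iff.1 hW
  obtain ⟨q, hq, hqr⟩ : ∃ q : ℚ, 0 < q ∧ q * ‖m‖ < r := by
    obtain ⟨q, hq, hqr⟩ := exists_rat_btwn (div_pos hr (by positivity : (0 : ℝ) < ‖m‖ + 1))
    refine ⟨q, by exact_mod_cast hq, ?_⟩
    rw [lt_div_iff₀ (by positivity)] at hqr
    nlinarith [norm_nonneg m]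
  set a : ι → ℚ := update (fun _ => q) i 1
  have ha : ∏ j, a j ≠ 0 := prod_ne_zero_iff.2 fun j _ => by
    rcases eq_or_ne j i with rfl | hj
    · simp [a]
    · simp [a, hj, hq.ne']
  have hscale : ∀ u, G (update ((q : ℝ) • m) i u) = (∏ j, a j) • G (update m i u) := fun u => by
    rw [← G.map_smul_univ]
    congr 1
    ext j
    rcases eq_or_ne j i with rfl | hj <;> simp [a, *, Rat.smul_def]
  let h : ℝ →+ ℝ := AddMonoidHom.mk' (fun u => G (update ((q : ℝ) • m) i u)) (G.map_update_add _ i)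
  have hh : IsBounded (h '' Metric.ball 0 r) := by
    refine hGW.subset (Set.image_subset_iff.2 fun u hu => ⟨_, hrW ?_, rfl⟩)
    rw [Metric.mem_ball, dist_zero_right, pi_norm_lt_iff hr]
    intro j
    rcases eq_or_ne j i with rfl | hj
    · simpa using hu
    · simp only [update_of_ne hj, Pi.smul_apply, norm_smul]
      rw [Real.norm_of_nonneg (by positivity)]
      exact (mul_le_mul_of_nonneg_left (norm_le_pi_norm m j) (by positivity)).trans_lt hqr
  have hlin :=
    map_real_smul h (h.continuous_of_isBounded_nhds_zero (Metric.ball_mem_nhds 0 hr) hh) c x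
  simp only [smul_eq_mul, h, AddMonoidHom.mk'_apply, hscale, Rat.smul_def] at hlin
  exact mul_left_cancel₀ (by exact_mod_cast ha) (hlin.trans (mul_left_comm _ _ _))

theorem MultilinearMap.apply_eq_prod_mul_of_isBounded {ι : Type*} [Fintype ι]
    (G : MultilinearMap ℚ (fun _ : ι => ℝ) ℝ) {W : Set (ι → ℝ)} (hW : W ∈ 𝓝 0)
    (hGW : IsBounded (G '' W)) (v : ι → ℝ) : G v = (∏ i, v i) * G 1 := by
  let G' : MultilinearMap ℝ (fun _ : ι => ℝ) ℝ :=
    { toFun := G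
      map_update_add' := G.map_update_add
      map_update_smul' := G.map_update_mul_of_isBounded hW hGW }
  have hG' := congrArg (· v) G'.mkPiRing_apply_one_eq_self
  simp only [MultilinearMap.mkPiRing_apply, smul_eq_mul] at hG'
  exact hG'.symm

theorem MultilinearMap.exists_mem_nhds_zero_isBounded_image {ι : Type*} [Fintype ι]
    (G : MultilinearMap ℚ (fun _ : ι => ℝ) ℝ) (hG : ∀ (σ : Equiv.Perm ι) m, G (m ∘ σ) = G m)
    {s : Set ℝ} (hs : MeasurableSet s) (hμs : 0 < volume s)
    (hGs : IsBounded ((fun x => G fun _ => x) '' s)) :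
    ∃ W ∈ 𝓝 (0 : ι → ℝ), IsBounded (G '' W) := by
  classical
  obtain ⟨V, hV, hVs⟩ := exists_mem_nhds_zero_forall_exists_add_mem (ι := Finset ι) volume hs hμs
  obtain ⟨C, hC⟩ := isBounded_iff_forall_norm_le.1 hGs
  refine ⟨{y | ∀ S : Finset ι, ∑ i ∈ S, y i ∈ V}, ?_,
    isBounded_iff_forall_norm_le.2 ⟨2 ^ Fintype.card ι * C, ?_⟩⟩
  · exact eventually_all.2 fun S =>
      (continuous_finsetSum S fun i _ => continuous_apply i).tendsto' 0 0 (by simp) hV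
  rintro _ ⟨y, hy, rfl⟩
  obtain ⟨x, hx⟩ := hVs _ hy
  have hpol := G.sum_neg_one_pow_smul_apply_add_sum hG x y
  calc ‖G y‖ ≤ ‖(Fintype.card ι).factorial • G y‖ := by
        rw [nsmul_eq_mul, norm_mul]
        exact le_mul_of_one_le_left (norm_nonneg _)
          (by simpa using Nat.one_le_iff_ne_zero.2 (Nat.factorial_ne_zero _))
    _ ≤ ∑ S : Finset ι, ‖(-1 : ℤ) ^ (Fintype.card ι - #S) • G (fun _ => x + ∑ i ∈ S, y i)‖ :=
        hpol ▸ norm_sum_le _ _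
    _ ≤ ∑ _S : Finset ι, C := sum_le_sum fun S _ => by
        simpa using hC _ ⟨_, hx S, rfl⟩
    _ = 2 ^ Fintype.card ι * C := by simp

theorem stmt_10 (n : ℕ) (F : (Fin n → ℝ) → ℝ)
    (haddF : ∀ (i : Fin n) (v : Fin n → ℝ) (y : ℝ),
      F (Function.update v i (v i + y)) = F v + F (Function.update v i y))
    (hsym : ∀ (σ : Equiv.Perm (Fin n)) (v : Fin n → ℝ), F (v ∘ σ) = F v)
    (hreg : (∃ x₀ : ℝ, ContinuousAt (fun x : ℝ => F (fun _ => x)) x₀) ∨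
      (∃ s : Set ℝ, MeasurableSet s ∧ 0 < volume s ∧
        ∃ C : ℝ, ∀ x ∈ s, |F (fun _ => x)| ≤ C) ∨
      (∃ s : Set ℝ, MeasurableSet s ∧ 0 < volume s ∧
        Measurable (fun x : s => F (fun _ => (x : ℝ))))) :
    ∃ c : ℝ, ∀ v : Fin n → ℝ, F v = c * ∏ i, v i := by
  have hadd : ∀ m i x y, F (update m i (x + y)) = F (update m i x) + F (update m i y) :=
    fun m i x y => by simpa using haddF i (update m i x) y
  let G := MultilinearMap.ofMapUpdateAdd F hadd
  obtain ⟨s, hs, hμs, hFs⟩ : ∃ s, MeasurableSet s ∧ 0 < volume s ∧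
      IsBounded ((fun x : ℝ => F fun _ => x) '' s) := by
    rcases hreg with ⟨x₀, hF⟩ | ⟨s, hs, hμs, C, hC⟩ | ⟨s, hs, hμs, hF⟩
    · exact hF.exists_measure_pos_isBounded_image volume
    · exact ⟨s, hs, hμs, isBounded_iff_forall_norm_le.2 ⟨C, Set.forall_mem_image.2 hC⟩⟩
    · exact exists_measure_pos_isBounded_image_of_measurable_restrict hs hμs hF
  obtain ⟨W, hW, hGW⟩ := G.exists_mem_nhds_zero_isBounded_image hsym hs hμs hFs
  exact ⟨F 1, fun v => (G.apply_eq_prod_mul_of_isBounded hW hGW v).trans (mul_comm _ _)⟩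
end

section
/- Suppose f : ℝ → ℝ is such that Δ_h f is continuous for every h ∈ ℝ, and f decomposes as f = a + γ with a additive and γ continuous. If moreover the map α ↦ δ_α^{n+1} f(1) is continuous at some point, then there exist an n-th order derivation d, a constant λ ∈ ℝ, and a continuous function γ such that f(x) = d(x) + λx + γ(x) for all x ∈ ℝ. -/
noncomputable def δ (α : ℝ) (f : ℝ → ℝ) : ℝ → ℝ := fun x => f (α * x) - α * f x

def IsDerivOfOrder (n : ℕ) (d : ℝ → ℝ) : Prop :=
  (∀ x y : ℝ, d (x + y) = d x + d y) ∧ d 1 = 0 ∧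
    ∀ l : List ℝ, l.length = n + 1 → ∀ x : ℝ, (l.foldr δ d) x = 0

/-!
Replace the additive part `a` of `f` by the `ℚ`-linear map `d = a - a 1 • id`, so that `f` is `d`
plus a continuous function. On `ℚ`-linear maps the operators `δ α` commute, depend `ℚ`-linearly on
`α` and vanish for rational `α`. Hence `ψ α = δ_α^{n+1} d (1)` differs from the given function
by a continuous one, is invariant under rational translations, and is therefore constant, equal
to `ψ 0 = 0`. Polarizing (expanding `δ_{β + qα}^{n+1}` in the rational parameter `q`) shows that
every product `δ_{α₁} ⋯ δ_{α_{n+1}} d` vanishes at `1`. Finally, a `ℚ`-linear `h` with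
`δ_t h (1) = 0` for all `t` satisfies `h t = t * h 1`, so it is killed by every `δ_β`; hence these
products vanish identically.
-/

open Polynomial Filter Topology

theorem map_pow_mul_eq_zero_of_forall_rat {A : Type*} [Ring A] [Algebra ℚ A] {x y : A}
    (hxy : Commute x y) (E : A →ₗ[ℚ] ℝ) (m : ℕ)
    (h : ∀ q : ℚ, E ((x + q • y) ^ (m + 1)) = 0) : E (x ^ m * y) = 0 := by
  -- `q ↦ E ((x + q • y) ^ (m + 1))` is a polynomial vanishing on `ℚ`, and its coefficient of `q`
  -- is `(m + 1) • E (y * x ^ m)`.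
  set c : ℕ → ℝ := fun k => E (y ^ k * x ^ (m + 1 - k) * ((m + 1).choose k : A))
  set P : ℝ[X] := ∑ k ∈ Finset.range (m + 2), C (c k) * X ^ k
  have hroot : ∀ q : ℚ, P.IsRoot q := by
    intro q
    rw [IsRoot, eval_finsetSum, ← h q, add_comm x, (hxy.symm.smul_left q).add_pow, map_sum]
    refine Finset.sum_congr rfl fun k _ => ?_
    rw [_root_.smul_pow, smul_mul_assoc, smul_mul_assoc, map_smul, Rat.smul_def, Rat.cast_pow,
      eval_C_mul, eval_X_pow, mul_comm]
  have hP : P = 0 := eq_zero_of_infinite_isRoot P <|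
    (Set.infinite_range_of_injective Rat.cast_injective).mono (by rintro _ ⟨q, rfl⟩; exact hroot q)
  have hc : c 1 = 0 := by
    simpa [P, finsetSum_coeff, coeff_C_mul_X_pow] using congr_arg (coeff · 1) hP
  have hc_eq : c 1 = (m + 1 : ℕ) • E (y * x ^ m) := by
    simp only [c, pow_one, Nat.choose_one_right, Nat.add_sub_cancel, ← nsmul_eq_mul', map_nsmul]
  rw [hc_eq, smul_eq_zero] at hc
  rw [(hxy.pow_left m).eq]
  exact hc.resolve_left m.succ_ne_zero

theorem ContinuousAt.eq_of_forall_add_ratCast {Y : Type*} [TopologicalSpace Y] [T2Space Y]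
    {ψ : ℝ → Y} {α₀ : ℝ} (hψ : ContinuousAt ψ α₀) (hper : ∀ β (q : ℚ), ψ (β + q) = ψ β)
    (β : ℝ) : ψ β = ψ α₀ := by
  have hdense : α₀ - β ∈ closure (Set.range ((↑) : ℚ → ℝ)) := by
    rw [Rat.denseRange_cast.closure_eq]; trivial
  have hψ' : Tendsto (fun t => ψ (β + t)) (𝓝 (α₀ - β)) (𝓝 (ψ α₀)) := by
    refine hψ.tendsto.comp ?_
    simpa using (continuous_const_add β).tendsto (α₀ - β)
  refine tendsto_nhds_unique_of_frequently_eq tendsto_const_nhds hψ' ?_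
  exact (mem_closure_iff_frequently.mp hdense).mono fun _ ⟨q, hq⟩ => hq ▸ (hper β q).symm

theorem δ_add (α : ℝ) (u v : ℝ → ℝ) : δ α (u + v) = δ α u + δ α v := by
  funext x
  simp only [δ, Pi.add_apply]
  ring

theorem iterate_δ_add (α : ℝ) (m : ℕ) (u v : ℝ → ℝ) :
    (δ α)^[m] (u + v) = (δ α)^[m] u + (δ α)^[m] v :=
  iterate_map_add (AddMonoidHom.mk' (δ α) (δ_add α)) m u v

theorem continuous_iterate_δ_uncurry {γ : ℝ → ℝ} (hγ : Continuous γ) (m : ℕ) :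
    Continuous (fun p : ℝ × ℝ => (δ p.1)^[m] γ p.2) := by
  induction m with
  | zero => exact hγ.comp continuous_snd
  | succ m ih =>
    simp only [Function.iterate_succ_apply', δ]
    exact (ih.comp (continuous_fst.prodMk (continuous_fst.mul continuous_snd))).sub
      (continuous_fst.mul ih)

/-- `δ α` on `ℚ`-linear maps (the additive maps `ℝ → ℝ` are exactly these), bundled as a
`ℚ`-linear function of `α`. -/
noncomputable def deltaEnd : ℝ →ₗ[ℚ] Module.End ℚ (ℝ →ₗ[ℚ] ℝ) :=
  LinearMap.mk₂ ℚ (fun α b => b ∘ₗ LinearMap.mulLeft ℚ α - α • b)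
    (fun α β b => by ext x; simp [add_mul, sub_add_sub_comm])
    (fun q α b => by ext x; simp [smul_sub])
    (fun α b c => by ext x; simp [sub_add_sub_comm])
    (fun q α b => by ext x; simp [smul_sub])

@[simp]
theorem deltaEnd_apply_apply (α : ℝ) (b : ℝ →ₗ[ℚ] ℝ) (x : ℝ) :
    deltaEnd α b x = b (α * x) - α * b x := rfl

theorem iterate_δ_coe (α : ℝ) (m : ℕ) (b : ℝ →ₗ[ℚ] ℝ) :
    (δ α)^[m] b = ⇑((deltaEnd α ^ m) b) := by
  rw [Module.End.pow_apply]
  exact (Function.Semiconj.iterate_right (f := DFunLike.coe) (ga := deltaEnd α) (gb := δ α)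
    (fun _ => rfl) m b).symm

theorem foldr_δ_coe (l : List ℝ) (b : ℝ →ₗ[ℚ] ℝ) :
    l.foldr δ b = ⇑((l.map deltaEnd).prod b) := by
  induction l with
  | nil => rfl
  | cons α l ih => rw [List.foldr_cons, ih]; rfl

theorem deltaEnd_ratCast (q : ℚ) : deltaEnd q = 0 := by
  rw [← Rat.smul_one_eq_cast, map_smul]
  convert smul_zero q
  ext b x
  simp

theorem commute_deltaEnd (α β : ℝ) : Commute (deltaEnd α) (deltaEnd β) := by
  ext b x
  simp only [Module.End.mul_apply, deltaEnd_apply_apply, mul_left_comm α β]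
  ring

theorem deltaEnd_eq_zero_of_forall_apply_one {b : ℝ →ₗ[ℚ] ℝ} (h : ∀ t, deltaEnd t b 1 = 0)
    (β : ℝ) : deltaEnd β b = 0 := by
  have hlin : ∀ t, b t = t * b 1 := fun t => by simpa [sub_eq_zero] using h t
  ext x
  simp [hlin (β * x), hlin x, mul_assoc]

theorem continuousAt_deltaEnd_pow_apply_one {b : ℝ →ₗ[ℚ] ℝ} {γ : ℝ → ℝ} (hγ : Continuous γ)
    {m : ℕ} {α₀ : ℝ} (h : ContinuousAt (fun α => (δ α)^[m] (b + γ) 1) α₀) :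
    ContinuousAt (fun α => (deltaEnd α ^ m) b 1) α₀ := by
  have hγ' : Continuous (fun α => (δ α)^[m] γ 1) :=
    (continuous_iterate_δ_uncurry hγ m).comp (continuous_id.prodMk continuous_const)
  convert h.sub hγ'.continuousAt using 1
  funext α
  simp [iterate_δ_add, iterate_δ_coe]

theorem deltaEnd_pow_apply_one_eq_zero {b : ℝ →ₗ[ℚ] ℝ} {m : ℕ} (hm : m ≠ 0)
    (hcont : ∃ α₀, ContinuousAt (fun α => (deltaEnd α ^ m) b 1) α₀) (α : ℝ) :
    (deltaEnd α ^ m) b 1 = 0 := by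
  obtain ⟨α₀, hα₀⟩ := hcont
  have hper : ∀ β (q : ℚ), (deltaEnd (β + q) ^ m) b 1 = (deltaEnd β ^ m) b 1 := by
    intro β q
    rw [map_add, deltaEnd_ratCast, add_zero]
  rw [hα₀.eq_of_forall_add_ratCast hper, ← hα₀.eq_of_forall_add_ratCast hper 0, map_zero,
    zero_pow hm]
  rfl

theorem list_prod_deltaEnd_apply_one_eq_zero (l : List ℝ) (b : ℝ →ₗ[ℚ] ℝ)
    (h : ∀ α, (deltaEnd α ^ l.length) b 1 = 0) : (l.map deltaEnd).prod b 1 = 0 := by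
  induction l generalizing b with
  | nil => simpa using h 0
  | cons β l ih =>
    have hcomm : Commute (deltaEnd β) (l.map deltaEnd).prod :=
      Commute.list_prod_right _ _ fun _ hT => by
        obtain ⟨α, -, rfl⟩ := List.mem_map.mp hT
        exact commute_deltaEnd β α
    rw [List.map_cons, List.prod_cons, hcomm.eq]
    refine ih (deltaEnd β b) fun α => ?_
    let E : Module.End ℚ (ℝ →ₗ[ℚ] ℝ) →ₗ[ℚ] ℝ := LinearMap.applyₗ (1 : ℝ) ∘ₗ LinearMap.applyₗ b
    refine map_pow_mul_eq_zero_of_forall_rat (commute_deltaEnd α β) E l.length fun q => ?_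
    rw [← map_smul, ← map_add]
    exact h _

theorem list_prod_deltaEnd_eq_zero (l : List ℝ) (b : ℝ →ₗ[ℚ] ℝ) (hl : l ≠ [])
    (h : ∀ α, (deltaEnd α ^ l.length) b 1 = 0) : (l.map deltaEnd).prod b = 0 := by
  obtain ⟨β, l, rfl⟩ := List.exists_cons_of_ne_nil hl
  exact deltaEnd_eq_zero_of_forall_apply_one
    (fun t => list_prod_deltaEnd_apply_one_eq_zero (t :: l) b h) β

theorem stmt_18_general (n : ℕ) (f : ℝ → ℝ)
    (hdec : ∃ (a γ : ℝ → ℝ), (∀ x y : ℝ, a (x + y) = a x + a y) ∧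
      Continuous γ ∧ ∀ x : ℝ, f x = a x + γ x)
    (hcont : ∃ α₀ : ℝ, ContinuousAt (fun α : ℝ => ((δ α)^[n + 1] f) 1) α₀) :
    ∃ (d : ℝ → ℝ) (lam : ℝ) (γ : ℝ → ℝ), IsDerivOfOrder n d ∧ Continuous γ ∧
      ∀ x : ℝ, f x = d x + lam * x + γ x := by
  obtain ⟨a, γ, ha, hγ, hf⟩ := hdec
  obtain ⟨α₀, hα₀⟩ := hcont
  let d : ℝ →ₗ[ℚ] ℝ :=
    (AddMonoidHom.mk' (fun x => a x - a 1 * x) fun x y => by rw [ha]; ring).toRatLinearMap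
  have hf' : f = d + fun x => a 1 * x + γ x := by
    funext x
    simp only [hf, AddMonoidHom.coe_toRatLinearMap, AddMonoidHom.mk'_apply, Pi.add_apply, d]
    ring
  have hd : ∀ α, (deltaEnd α ^ (n + 1)) d 1 = 0 :=
    deltaEnd_pow_apply_one_eq_zero n.succ_ne_zero
      ⟨α₀, continuousAt_deltaEnd_pow_apply_one (by fun_prop) (hf' ▸ hα₀)⟩
  refine ⟨d, a 1, γ, ⟨map_add d, by simp [d], fun l hl x => ?_⟩, hγ, fun x => by simp [d, hf]⟩
  rw [foldr_δ_coe, list_prod_deltaEnd_eq_zero l d (List.ne_nil_of_length_eq_add_one hl) (hl ▸ hd)]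
  rfl

theorem stmt_18 (n : ℕ) (f : ℝ → ℝ)
    (hdiff : ∀ h : ℝ, Continuous (fun x : ℝ => f (x + h) - f x))
    (hdec : ∃ (a γ : ℝ → ℝ), (∀ x y : ℝ, a (x + y) = a x + a y) ∧
      Continuous γ ∧ ∀ x : ℝ, f x = a x + γ x)
    (hcont : ∃ α₀ : ℝ, ContinuousAt (fun α : ℝ => ((δ α)^[n + 1] f) 1) α₀) :
    ∃ (d : ℝ → ℝ) (lam : ℝ) (γ : ℝ → ℝ), IsDerivOfOrder n d ∧ Continuous γ ∧
      ∀ x : ℝ, f x = d x + lam * x + γ x :=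
  stmt_18_general n f hdec hcont
end
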